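/- Fix the MIBLP data as in the context. The inducible region IR is equal to the feasible set of the projection-based single-level formulation, namely the set of tuples (x^u, y^u, x^{l0}, y^{l0}) ∈ Ω such that for every nonnegative integer vector y ∈ ℤ^{nZ} with (x^u,y^u) ∈ Proj_{(x^u,y^u)} P(y), there exist x ∈ ℝ^{nR}, π ∈ ℝ^{nL}, x ≥ 0, π ≥ 0, satisfying the KKT conditions for the inner LP at (x^u, y^u, y) together with w_R·x^{l0} + w_Z·y^{l0} ≥ w_R·x + w_Z·y. Consequently, the infimum of the objective c_R·x^u + c_Z·y^u + d_R·x^{l0} + d_Z·y^{l0} over IR equals its infimum over the projection-based feasible set. -/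

import Mathlib

open Matrix

noncomputable section

/-- Coercion of an integer vector into real space. -/
def cRv {n : ℕ} (y : Fin n → ℤ) : Fin n → ℝ := fun i => (y i : ℝ)

variable {mR mZ nR nZ nU nL : ℕ}

/-- The MIBLP constraint region Ω. -/
def OmegaSet (A_R : Matrix (Fin nU) (Fin mR) ℝ) (A_Z : Matrix (Fin nU) (Fin mZ) ℝ)
    (B_R : Matrix (Fin nU) (Fin nR) ℝ) (B_Z : Matrix (Fin nU) (Fin nZ) ℝ)
    (Q_R : Matrix (Fin nL) (Fin mR) ℝ) (Q_Z : Matrix (Fin nL) (Fin mZ) ℝ)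
    (P_R : Matrix (Fin nL) (Fin nR) ℝ) (P_Z : Matrix (Fin nL) (Fin nZ) ℝ)
    (r : Fin nU → ℝ) (s : Fin nL → ℝ) :
    Set ((Fin mR → ℝ) × (Fin mZ → ℤ) × (Fin nR → ℝ) × (Fin nZ → ℤ)) :=
  {p | 0 ≤ p.1 ∧ 0 ≤ p.2.1 ∧ 0 ≤ p.2.2.1 ∧ 0 ≤ p.2.2.2 ∧
    A_R *ᵥ p.1 + A_Z *ᵥ cRv p.2.1 + B_R *ᵥ p.2.2.1 + B_Z *ᵥ cRv p.2.2.2 ≤ r ∧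
    Q_R *ᵥ p.1 + Q_Z *ᵥ cRv p.2.1 + P_R *ᵥ p.2.2.1 + P_Z *ᵥ cRv p.2.2.2 ≤ s}

/-- The lower-level feasible region Ω_{(x^u,y^u)}. -/
def LowerFeas (Q_R : Matrix (Fin nL) (Fin mR) ℝ) (Q_Z : Matrix (Fin nL) (Fin mZ) ℝ)
    (P_R : Matrix (Fin nL) (Fin nR) ℝ) (P_Z : Matrix (Fin nL) (Fin nZ) ℝ)
    (s : Fin nL → ℝ) (xu : Fin mR → ℝ) (yu : Fin mZ → ℤ) :
    Set ((Fin nR → ℝ) × (Fin nZ → ℤ)) :=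
  {q | 0 ≤ q.1 ∧ 0 ≤ q.2 ∧
    P_R *ᵥ q.1 + P_Z *ᵥ cRv q.2 ≤ s - Q_R *ᵥ xu - Q_Z *ᵥ cRv yu}

/-- The inducible region IR. -/
def IRset (A_R : Matrix (Fin nU) (Fin mR) ℝ) (A_Z : Matrix (Fin nU) (Fin mZ) ℝ)
    (B_R : Matrix (Fin nU) (Fin nR) ℝ) (B_Z : Matrix (Fin nU) (Fin nZ) ℝ)
    (Q_R : Matrix (Fin nL) (Fin mR) ℝ) (Q_Z : Matrix (Fin nL) (Fin mZ) ℝ)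
    (P_R : Matrix (Fin nL) (Fin nR) ℝ) (P_Z : Matrix (Fin nL) (Fin nZ) ℝ)
    (w_R : Fin nR → ℝ) (w_Z : Fin nZ → ℝ) (r : Fin nU → ℝ) (s : Fin nL → ℝ) :
    Set ((Fin mR → ℝ) × (Fin mZ → ℤ) × (Fin nR → ℝ) × (Fin nZ → ℤ)) :=
  {p | p ∈ OmegaSet A_R A_Z B_R B_Z Q_R Q_Z P_R P_Z r s ∧
    (p.2.2.1, p.2.2.2) ∈ LowerFeas Q_R Q_Z P_R P_Z s p.1 p.2.1 ∧
    ∀ q ∈ LowerFeas Q_R Q_Z P_R P_Z s p.1 p.2.1,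
      w_R ⬝ᵥ q.1 + w_Z ⬝ᵥ cRv q.2 ≤ w_R ⬝ᵥ p.2.2.1 + w_Z ⬝ᵥ cRv p.2.2.2}

/-- Membership of (x^u,y^u) in Proj_{(x^u,y^u)} P(y). -/
def ProjMem (Q_R : Matrix (Fin nL) (Fin mR) ℝ) (Q_Z : Matrix (Fin nL) (Fin mZ) ℝ)
    (P_R : Matrix (Fin nL) (Fin nR) ℝ) (P_Z : Matrix (Fin nL) (Fin nZ) ℝ)
    (s : Fin nL → ℝ) (xu : Fin mR → ℝ) (yu : Fin mZ → ℤ) (y : Fin nZ → ℤ) : Prop :=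
  0 ≤ xu ∧ 0 ≤ yu ∧ 0 ≤ y ∧
    ∃ x : Fin nR → ℝ, 0 ≤ x ∧
      Q_R *ᵥ xu + Q_Z *ᵥ cRv yu + P_R *ᵥ x ≤ s - P_Z *ᵥ cRv y

/-- KKT conditions for the inner LP max{w_R·x : P_R x ≤ b, x ≥ 0},
where b = s − Q_R x^u − Q_Z y^u − P_Z y. -/
def KKTcond (Q_R : Matrix (Fin nL) (Fin mR) ℝ) (Q_Z : Matrix (Fin nL) (Fin mZ) ℝ)
    (P_R : Matrix (Fin nL) (Fin nR) ℝ) (P_Z : Matrix (Fin nL) (Fin nZ) ℝ)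
    (w_R : Fin nR → ℝ) (s : Fin nL → ℝ)
    (xu : Fin mR → ℝ) (yu : Fin mZ → ℤ) (y : Fin nZ → ℤ)
    (x : Fin nR → ℝ) (π : Fin nL → ℝ) : Prop :=
  0 ≤ x ∧ 0 ≤ π ∧
  P_R *ᵥ x ≤ s - Q_R *ᵥ xu - Q_Z *ᵥ cRv yu - P_Z *ᵥ cRv y ∧
  w_R ≤ P_Rᵀ *ᵥ π ∧
  (∀ i, x i * ((P_Rᵀ *ᵥ π) i - w_R i) = 0) ∧
  (∀ k, π k * ((s - Q_R *ᵥ xu - Q_Z *ᵥ cRv yu - P_Z *ᵥ cRv y) k - (P_R *ᵥ x) k) = 0)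

/-- The feasible set of the projection-based single-level formulation (P4). -/
def ProjFeasSet (A_R : Matrix (Fin nU) (Fin mR) ℝ) (A_Z : Matrix (Fin nU) (Fin mZ) ℝ)
    (B_R : Matrix (Fin nU) (Fin nR) ℝ) (B_Z : Matrix (Fin nU) (Fin nZ) ℝ)
    (Q_R : Matrix (Fin nL) (Fin mR) ℝ) (Q_Z : Matrix (Fin nL) (Fin mZ) ℝ)
    (P_R : Matrix (Fin nL) (Fin nR) ℝ) (P_Z : Matrix (Fin nL) (Fin nZ) ℝ)
    (w_R : Fin nR → ℝ) (w_Z : Fin nZ → ℝ) (r : Fin nU → ℝ) (s : Fin nL → ℝ) :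
    Set ((Fin mR → ℝ) × (Fin mZ → ℤ) × (Fin nR → ℝ) × (Fin nZ → ℤ)) :=
  {p | p ∈ OmegaSet A_R A_Z B_R B_Z Q_R Q_Z P_R P_Z r s ∧
    ∀ y : Fin nZ → ℤ, 0 ≤ y → ProjMem Q_R Q_Z P_R P_Z s p.1 p.2.1 y →
      ∃ (x : Fin nR → ℝ) (π : Fin nL → ℝ),
        KKTcond Q_R Q_Z P_R P_Z w_R s p.1 p.2.1 y x π ∧
        w_R ⬝ᵥ x + w_Z ⬝ᵥ cRv y ≤ w_R ⬝ᵥ p.2.2.1 + w_Z ⬝ᵥ cRv p.2.2.2}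

/-!
Fix the upper-level decision `(xu, yu)` and the integer part `y` of a lower-level response.
What remains of the lower level is the linear program `max {w_R ⬝ᵥ x | P_R x ≤ b, 0 ≤ x}` with
`b = s - Q_R xu - Q_Z yu - P_Z y`, which is feasible exactly when `(xu, yu) ∈ Proj P(y)`.
The KKT points of this program are its optimal solutions (complementary slackness closes the
weak-duality gap), and a feasible program that is bounded above has one (LP strong duality,
obtained from Farkas' lemma). So `(xl, yl)` is lower-level optimal iff, for every such `y`,
some KKT point `x` has `w_R ⬝ᵥ x + w_Z ⬝ᵥ y ≤ w_R ⬝ᵥ xl + w_Z ⬝ᵥ yl`: this identifies `IRset`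
with `ProjFeasSet`, and equal sets have equal infima.
-/

namespace PointedCone

variable {𝕜 E : Type*} [Field 𝕜] [LinearOrder 𝕜] [IsStrictOrderedRing 𝕜]
  [AddCommGroup E] [Module 𝕜 E]

lemma apply_nonneg_of_mem_hull {S : Set E} {f : Module.Dual 𝕜 E} (hf : ∀ v ∈ S, 0 ≤ f v)
    {z : E} (hz : z ∈ hull 𝕜 S) : 0 ≤ f z :=
  (Submodule.span_le (p := (positive 𝕜 𝕜).comap f)).mpr hf hz

lemma hull_image (p : E →ₗ[𝕜] E) (S : Set E) : hull 𝕜 (p '' S) = (hull 𝕜 S).map p :=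
  Submodule.span_image (p.restrictScalars _)

theorem mem_hull_image_or_exists_dual {κ : Type*} (s : Finset κ) (v : κ → E) (b : E) :
    b ∈ hull 𝕜 (v '' s) ∨ ∃ f : Module.Dual 𝕜 E, (∀ i ∈ s, 0 ≤ f (v i)) ∧ f b < 0 := by
  classical
  induction s using Finset.induction_on generalizing v b with
  | empty =>
    by_cases hb : b = 0
    · exact .inl (hb ▸ zero_mem _)
    · obtain ⟨f, hf⟩ := Module.Projective.exists_dual_ne_zero 𝕜 hb
      exact .inr ⟨-(f b)⁻¹ • f, by simp, by simp [hf]⟩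
  | insert a s _ ih =>
    rw [Finset.coe_insert, Set.image_insert_eq]
    obtain hb | ⟨f, hfs, hfb⟩ := ih v b
    · exact .inl (Submodule.span_mono (Set.subset_insert _ _) hb)
    by_cases hfa : 0 ≤ f (v a)
    · exact .inr ⟨f, Finset.forall_mem_insert _ _ _ |>.mpr ⟨hfa, hfs⟩, hfb⟩
    push Not at hfa
    -- `p` projects along `v a` onto the kernel of `f`
    set p : E →ₗ[𝕜] E := LinearMap.id - ((f (v a))⁻¹ • f).smulRight (v a) with hp
    have hpa : p (v a) = 0 := by simp [hp, hfa.ne]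
    obtain hpb | ⟨g, hgs, hgb⟩ := ih (p ∘ v) (p b)
    · rw [Set.image_comp, hull_image, mem_map] at hpb
      obtain ⟨z, hz, hpz⟩ := hpb
      have hfz : 0 ≤ f z := apply_nonneg_of_mem_hull (by simpa using hfs) hz
      refine .inl (Submodule.mem_span_insert.mpr
        ⟨⟨(f b - f z) / f (v a), div_nonneg_of_nonpos (by linarith) hfa.le⟩, z, hz, ?_⟩)
      simp only [hp, LinearMap.sub_apply, LinearMap.id_apply, LinearMap.smulRight_apply,
        LinearMap.smul_apply, smul_eq_mul] at hpz
      rw [Nonneg.mk_smul]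
      linear_combination (norm := module) -hpz
    · refine .inr ⟨g ∘ₗ p, Finset.forall_mem_insert _ _ _ |>.mpr ⟨by simp [hpa], hgs⟩, hgb⟩

end PointedCone

section Farkas

variable {𝕜 ι κ : Type*} [Field 𝕜] [LinearOrder 𝕜] [IsStrictOrderedRing 𝕜]
  [Fintype ι] [Fintype κ] [DecidableEq ι]

theorem Matrix.exists_nonneg_mulVec_le_or_exists_nonneg_vecMul_nonneg (A : Matrix ι κ 𝕜)
    (c : ι → 𝕜) :
    (∃ x, 0 ≤ x ∧ A *ᵥ x ≤ c) ∨ ∃ y, 0 ≤ y ∧ 0 ≤ y ᵥ* A ∧ y ⬝ᵥ c < 0 := by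
  -- `A x ≤ c` with `x ≥ 0` says that `c` is a conic combination of the columns of `A`
  -- and the unit vectors
  let v : κ ⊕ ι → ι → 𝕜 := Sum.elim (fun j i => A i j) (fun i => Pi.single i 1)
  obtain hc | ⟨f, hf, hfc⟩ := PointedCone.mem_hull_image_or_exists_dual (𝕜 := 𝕜) Finset.univ v c
  · rw [Finset.coe_univ, Set.image_univ] at hc
    obtain ⟨a, ha⟩ := (Submodule.mem_span_range_iff_exists_fun _).mp hc
    refine .inl ⟨fun j => a (.inl j), fun j => (a (.inl j)).2, fun i => ?_⟩
    have hci := congrFun ha i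
    simp only [v, ← Nonneg.coe_smul, Fintype.sum_sum_type, Finset.sum_apply,
      Pi.smul_apply, Sum.elim_inl, Sum.elim_inr, Pi.single_apply, smul_eq_mul, mul_ite, mul_one,
      mul_zero, Finset.sum_ite_eq, Finset.mem_univ, if_true] at hci
    simp only [mulVec, dotProduct, ← hci, mul_comm (A i _)]
    exact le_add_of_nonneg_right (a (.inr i)).2
  · obtain ⟨y, rfl⟩ := (dotProductEquiv 𝕜 ι).surjective f
    refine .inr ⟨y, fun i => ?_, fun j => ?_, hfc⟩
    · simpa [v] using hf (.inr i) (Finset.mem_univ _)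
    · simpa [v, vecMul] using hf (.inl j) (Finset.mem_univ _)

end Farkas

section LinearProgram

variable {𝕜 ι κ : Type*} [Field 𝕜] [LinearOrder 𝕜] [Fintype ι] [Fintype κ]
  {M : Matrix ι κ 𝕜} {b : ι → 𝕜} {w : κ → 𝕜}

/-- KKT conditions for the linear program `max {w ⬝ᵥ x | M x ≤ b, 0 ≤ x}`. -/
def IsKKTPair (M : Matrix ι κ 𝕜) (b : ι → 𝕜) (w : κ → 𝕜) (x : κ → 𝕜) (π : ι → 𝕜) : Prop :=
  0 ≤ x ∧ 0 ≤ π ∧ M *ᵥ x ≤ b ∧ w ≤ Mᵀ *ᵥ π ∧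
    (∀ i, x i * ((Mᵀ *ᵥ π) i - w i) = 0) ∧ ∀ k, π k * (b k - (M *ᵥ x) k) = 0

theorem IsKKTPair.dotProduct_eq {x : κ → 𝕜} {π : ι → 𝕜} (h : IsKKTPair M b w x π) :
    w ⬝ᵥ x = π ⬝ᵥ b := by
  obtain ⟨-, -, -, -, hx, hπ⟩ := h
  have hx' : x ⬝ᵥ (Mᵀ *ᵥ π - w) = 0 := Finset.sum_eq_zero fun i _ => hx i
  have hπ' : π ⬝ᵥ (b - M *ᵥ x) = 0 := Finset.sum_eq_zero fun k _ => hπ k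
  rw [dotProduct_sub, dotProduct_transpose_mulVec M, sub_eq_zero] at hx'
  rw [dotProduct_sub, sub_eq_zero] at hπ'
  rw [dotProduct_comm, ← hx', hπ']

variable [IsStrictOrderedRing 𝕜]

theorem dotProduct_le_dotProduct_of_dual_feasible {x : κ → 𝕜} {π : ι → 𝕜} (hx : 0 ≤ x)
    (hMx : M *ᵥ x ≤ b) (hπ : 0 ≤ π) (hw : w ≤ Mᵀ *ᵥ π) : w ⬝ᵥ x ≤ π ⬝ᵥ b :=
  calc w ⬝ᵥ x ≤ (Mᵀ *ᵥ π) ⬝ᵥ x := dotProduct_le_dotProduct_of_nonneg_right hw hx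
    _ = π ⬝ᵥ (M *ᵥ x) := by rw [dotProduct_comm, dotProduct_transpose_mulVec]
    _ ≤ π ⬝ᵥ b := dotProduct_le_dotProduct_of_nonneg_left hMx hπ

theorem dotProduct_eq_zero_iff_of_nonneg {u a : κ → 𝕜} (hu : 0 ≤ u) (ha : 0 ≤ a) :
    u ⬝ᵥ a = 0 ↔ ∀ i, u i * a i = 0 := by
  simpa [dotProduct] using
    Finset.sum_eq_zero_iff_of_nonneg (s := Finset.univ) fun i _ => mul_nonneg (hu i) (ha i)

theorem IsKKTPair.dotProduct_le {x : κ → 𝕜} {π : ι → 𝕜} (h : IsKKTPair M b w x π)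
    {x' : κ → 𝕜} (hx' : 0 ≤ x') (hMx' : M *ᵥ x' ≤ b) : w ⬝ᵥ x' ≤ w ⬝ᵥ x :=
  h.dotProduct_eq ▸ dotProduct_le_dotProduct_of_dual_feasible hx' hMx' h.2.1 h.2.2.2.1

theorem isKKTPair_of_dotProduct_le {x : κ → 𝕜} {π : ι → 𝕜} (hx : 0 ≤ x) (hMx : M *ᵥ x ≤ b)
    (hπ : 0 ≤ π) (hw : w ≤ Mᵀ *ᵥ π) (hgap : π ⬝ᵥ b ≤ w ⬝ᵥ x) : IsKKTPair M b w x π := by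
  have hwx : w ⬝ᵥ x ≤ π ⬝ᵥ (M *ᵥ x) := by
    rw [dotProduct_comm, ← dotProduct_transpose_mulVec M]
    exact dotProduct_le_dotProduct_of_nonneg_left hw hx
  have hπMx : π ⬝ᵥ (M *ᵥ x) ≤ π ⬝ᵥ b := dotProduct_le_dotProduct_of_nonneg_left hMx hπ
  refine ⟨hx, hπ, hMx, hw, (dotProduct_eq_zero_iff_of_nonneg hx (sub_nonneg.mpr hw)).mp ?_,
    (dotProduct_eq_zero_iff_of_nonneg hπ (sub_nonneg.mpr hMx)).mp ?_⟩
  · rw [dotProduct_sub, dotProduct_transpose_mulVec M, dotProduct_comm x w]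
    linarith
  · rw [dotProduct_sub]
    linarith

theorem dotProduct_le_dotProduct_of_homogeneous_dual_feasible {x₀ : κ → 𝕜} (hx₀ : 0 ≤ x₀)
    (hMx₀ : M *ᵥ x₀ ≤ b) {C : 𝕜} (hbdd : ∀ x, 0 ≤ x → M *ᵥ x ≤ b → w ⬝ᵥ x ≤ C)
    {u : ι → 𝕜} {v : κ → 𝕜} {t : 𝕜} (hu : 0 ≤ u) (hv : 0 ≤ v) (ht : 0 ≤ t)
    (hw : t • w ≤ Mᵀ *ᵥ u) (hMv : M *ᵥ v ≤ t • b) : w ⬝ᵥ v ≤ u ⬝ᵥ b := by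
  obtain rfl | ht := ht.eq_or_lt
  · -- `v` is a recession direction of the feasible region, along which `w` must be bounded
    have hwv : w ⬝ᵥ v ≤ 0 := by
      by_contra! hwv
      set μ := (C - w ⬝ᵥ x₀ + 1) / (w ⬝ᵥ v)
      have hμ : 0 ≤ μ := div_nonneg (by linarith [hbdd x₀ hx₀ hMx₀]) hwv.le
      have hMx : M *ᵥ (x₀ + μ • v) ≤ b := by
        rw [mulVec_add, mulVec_smul]
        simpa using add_le_add hMx₀ (smul_le_smul_of_nonneg_left hMv hμ)
      have := hbdd _ (add_nonneg hx₀ (smul_nonneg hμ hv)) hMx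
      rw [dotProduct_add, dotProduct_smul, smul_eq_mul, div_mul_cancel₀ _ hwv.ne'] at this
      linarith
    have hub : 0 ≤ u ⬝ᵥ b :=
      calc 0 ≤ x₀ ⬝ᵥ (Mᵀ *ᵥ u) := dotProduct_nonneg_of_nonneg hx₀ (by simpa using hw)
        _ = u ⬝ᵥ (M *ᵥ x₀) := dotProduct_transpose_mulVec M x₀ u
        _ ≤ u ⬝ᵥ b := dotProduct_le_dotProduct_of_nonneg_left hMx₀ hu
    linarith
  · have := dotProduct_le_dotProduct_of_dual_feasible hv hMv hu hw
    rw [smul_dotProduct, dotProduct_smul, smul_eq_mul, smul_eq_mul] at this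
    exact le_of_mul_le_mul_left this ht

theorem exists_isKKTPair [DecidableEq ι] [DecidableEq κ] {x₀ : κ → 𝕜} (hx₀ : 0 ≤ x₀)
    (hMx₀ : M *ᵥ x₀ ≤ b) {C : 𝕜} (hbdd : ∀ x, 0 ≤ x → M *ᵥ x ≤ b → w ⬝ᵥ x ≤ C) :
    ∃ x π, IsKKTPair M b w x π := by
  -- the primal and dual constraints together with `b ⬝ᵥ π - w ⬝ᵥ x ≤ 0`, in the variables `(x, π)`
  let A : Matrix ((ι ⊕ κ) ⊕ Unit) (κ ⊕ ι) 𝕜 :=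
    fromRows (fromBlocks M 0 0 (-Mᵀ)) (replicateRow Unit (Sum.elim (-w) b))
  obtain ⟨z, hz, hAz⟩ | ⟨y, hy, hyA, hyc⟩ :=
    A.exists_nonneg_mulVec_le_or_exists_nonneg_vecMul_nonneg (Sum.elim (Sum.elim b (-w)) 0)
  · set x := z ∘ Sum.inl
    set π := z ∘ Sum.inr
    have hMx : M *ᵥ x ≤ b := fun i => by
      simpa [A, fromRows_mulVec, fromBlocks_mulVec] using hAz (.inl (.inl i))
    have hw : w ≤ Mᵀ *ᵥ π := fun j => by
      simpa [A, fromRows_mulVec, fromBlocks_mulVec, neg_mulVec] using hAz (.inl (.inr j))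
    have hgap : π ⬝ᵥ b ≤ w ⬝ᵥ x := by
      simpa [A, x, π, fromRows_mulVec, replicateRow_mulVec_eq_const, dotProduct,
        Fintype.sum_sum_type, mul_comm] using hAz (.inr ())
    exact ⟨x, π, isKKTPair_of_dotProduct_le (fun _ => hz _) hMx (fun _ => hz _) hw hgap⟩
  · set u := y ∘ Sum.inl ∘ Sum.inl
    set v := y ∘ Sum.inl ∘ Sum.inr
    set t := y (.inr ())
    have hw : t • w ≤ Mᵀ *ᵥ u := fun j => by
      simpa [A, u, t, vecMul_fromRows, vecMul_fromBlocks, vecMul, mulVec, dotProduct, mul_comm]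
        using hyA (.inl j)
    have hMv : M *ᵥ v ≤ t • b := fun i => by
      simpa [A, v, t, vecMul_fromRows, vecMul_fromBlocks, vecMul, mulVec, dotProduct, mul_comm]
        using hyA (.inr i)
    have hgap : u ⬝ᵥ b < w ⬝ᵥ v := by
      simpa [u, v, dotProduct, Fintype.sum_sum_type, mul_comm] using hyc
    exact absurd hgap (dotProduct_le_dotProduct_of_homogeneous_dual_feasible hx₀ hMx₀ hbdd
      (fun _ => hy _) (fun _ => hy _) (hy _) hw hMv).not_gt

end LinearProgram

section MIBLP

variable {Q_R : Matrix (Fin nL) (Fin mR) ℝ} {Q_Z : Matrix (Fin nL) (Fin mZ) ℝ}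
  {P_R : Matrix (Fin nL) (Fin nR) ℝ} {P_Z : Matrix (Fin nL) (Fin nZ) ℝ} {s : Fin nL → ℝ}
  {xu : Fin mR → ℝ} {yu : Fin mZ → ℤ}

lemma mem_lowerFeas_iff {x : Fin nR → ℝ} {y : Fin nZ → ℤ} :
    (x, y) ∈ LowerFeas Q_R Q_Z P_R P_Z s xu yu ↔
      0 ≤ x ∧ 0 ≤ y ∧ P_R *ᵥ x ≤ s - Q_R *ᵥ xu - Q_Z *ᵥ cRv yu - P_Z *ᵥ cRv y := by
  simp only [LowerFeas, Set.mem_ofPred_eq, le_sub_iff_add_le]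

lemma projMem_iff (hxu : 0 ≤ xu) (hyu : 0 ≤ yu) {y : Fin nZ → ℤ} :
    ProjMem Q_R Q_Z P_R P_Z s xu yu y ↔ ∃ x, (x, y) ∈ LowerFeas Q_R Q_Z P_R P_Z s xu yu := by
  simp only [ProjMem, LowerFeas, Set.mem_ofPred_eq, hxu, hyu, true_and, le_sub_iff_add_le,
    sub_sub, add_comm (P_R *ᵥ _ + _), ← add_assoc, exists_and_left, and_left_comm (b := 0 ≤ y)]

lemma kktCond_iff_isKKTPair {w_R : Fin nR → ℝ} {y : Fin nZ → ℤ} {x : Fin nR → ℝ}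
    {π : Fin nL → ℝ} :
    KKTcond Q_R Q_Z P_R P_Z w_R s xu yu y x π ↔
      IsKKTPair P_R (s - Q_R *ᵥ xu - Q_Z *ᵥ cRv yu - P_Z *ᵥ cRv y) w_R x π :=
  Iff.rfl

lemma mem_lowerFeas_of_mem_omegaSet {A_R : Matrix (Fin nU) (Fin mR) ℝ}
    {A_Z : Matrix (Fin nU) (Fin mZ) ℝ} {B_R : Matrix (Fin nU) (Fin nR) ℝ}
    {B_Z : Matrix (Fin nU) (Fin nZ) ℝ} {r : Fin nU → ℝ} {p}
    (hp : p ∈ OmegaSet A_R A_Z B_R B_Z Q_R Q_Z P_R P_Z r s) :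
    (p.2.2.1, p.2.2.2) ∈ LowerFeas Q_R Q_Z P_R P_Z s p.1 p.2.1 := by
  obtain ⟨-, -, hxl, hyl, -, hQ⟩ := hp
  refine ⟨hxl, hyl, ?_⟩
  rwa [sub_sub, le_sub_iff_add_le, add_comm, ← add_assoc]

end MIBLP

section InducibleRegion

variable (A_R : Matrix (Fin nU) (Fin mR) ℝ) (A_Z : Matrix (Fin nU) (Fin mZ) ℝ)
  (B_R : Matrix (Fin nU) (Fin nR) ℝ) (B_Z : Matrix (Fin nU) (Fin nZ) ℝ)
  (Q_R : Matrix (Fin nL) (Fin mR) ℝ) (Q_Z : Matrix (Fin nL) (Fin mZ) ℝ)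
  (P_R : Matrix (Fin nL) (Fin nR) ℝ) (P_Z : Matrix (Fin nL) (Fin nZ) ℝ)
  (w_R : Fin nR → ℝ) (w_Z : Fin nZ → ℝ) (r : Fin nU → ℝ) (s : Fin nL → ℝ)

theorem IRset_subset_ProjFeasSet :
    IRset A_R A_Z B_R B_Z Q_R Q_Z P_R P_Z w_R w_Z r s ⊆
      ProjFeasSet A_R A_Z B_R B_Z Q_R Q_Z P_R P_Z w_R w_Z r s := by
  rintro ⟨xu, yu, xl, yl⟩ ⟨hΩ, -, hopt⟩
  refine ⟨hΩ, fun y _ hproj => ?_⟩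
  obtain ⟨x₀, hq₀⟩ := (projMem_iff hΩ.1 hΩ.2.1).mp hproj
  obtain ⟨hx₀, hy, hPx₀⟩ := mem_lowerFeas_iff.mp hq₀
  have hbdd : ∀ x, 0 ≤ x → P_R *ᵥ x ≤ s - Q_R *ᵥ xu - Q_Z *ᵥ cRv yu - P_Z *ᵥ cRv y →
      w_R ⬝ᵥ x ≤ w_R ⬝ᵥ xl + w_Z ⬝ᵥ cRv yl - w_Z ⬝ᵥ cRv y := fun x hx hPx => by
    have := hopt (x, y) (mem_lowerFeas_iff.mpr ⟨hx, hy, hPx⟩)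
    dsimp only at this
    linarith
  obtain ⟨x, π, hKKT⟩ := exists_isKKTPair hx₀ hPx₀ hbdd
  exact ⟨x, π, kktCond_iff_isKKTPair.mpr hKKT, by linarith [hbdd x hKKT.1 hKKT.2.2.1]⟩

theorem ProjFeasSet_subset_IRset :
    ProjFeasSet A_R A_Z B_R B_Z Q_R Q_Z P_R P_Z w_R w_Z r s ⊆
      IRset A_R A_Z B_R B_Z Q_R Q_Z P_R P_Z w_R w_Z r s := by
  rintro ⟨xu, yu, xl, yl⟩ ⟨hΩ, hKKT⟩
  refine ⟨hΩ, mem_lowerFeas_of_mem_omegaSet hΩ, ?_⟩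
  rintro ⟨x', y'⟩ hq
  obtain ⟨hx', hy', hPx'⟩ := mem_lowerFeas_iff.mp hq
  obtain ⟨x, π, hxπ, hle⟩ := hKKT y' hy' ((projMem_iff hΩ.1 hΩ.2.1).mpr ⟨x', hq⟩)
  have := (kktCond_iff_isKKTPair.mp hxπ).dotProduct_le hx' hPx'
  dsimp only
  linarith

theorem IRset_eq_ProjFeasSet :
    IRset A_R A_Z B_R B_Z Q_R Q_Z P_R P_Z w_R w_Z r s =
      ProjFeasSet A_R A_Z B_R B_Z Q_R Q_Z P_R P_Z w_R w_Z r s :=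
  (IRset_subset_ProjFeasSet ..).antisymm (ProjFeasSet_subset_IRset ..)

end InducibleRegion

/-- Theorem 1: the inducible region equals the feasible set of
the projection-based single-level formulation; consequently the infima of the
objective over the two sets coincide. -/
theorem stmt_1
    (mR mZ nR nZ nU nL : ℕ)
    (A_R : Matrix (Fin nU) (Fin mR) ℝ) (A_Z : Matrix (Fin nU) (Fin mZ) ℝ)
    (B_R : Matrix (Fin nU) (Fin nR) ℝ) (B_Z : Matrix (Fin nU) (Fin nZ) ℝ)
    (Q_R : Matrix (Fin nL) (Fin mR) ℝ) (Q_Z : Matrix (Fin nL) (Fin mZ) ℝ)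
    (P_R : Matrix (Fin nL) (Fin nR) ℝ) (P_Z : Matrix (Fin nL) (Fin nZ) ℝ)
    (c_R : Fin mR → ℝ) (c_Z : Fin mZ → ℝ) (d_R : Fin nR → ℝ) (d_Z : Fin nZ → ℝ)
    (w_R : Fin nR → ℝ) (w_Z : Fin nZ → ℝ) (r : Fin nU → ℝ) (s : Fin nL → ℝ) :
    IRset A_R A_Z B_R B_Z Q_R Q_Z P_R P_Z w_R w_Z r s =
      ProjFeasSet A_R A_Z B_R B_Z Q_R Q_Z P_R P_Z w_R w_Z r s ∧
    sInf ((fun p : (Fin mR → ℝ) × (Fin mZ → ℤ) × (Fin nR → ℝ) × (Fin nZ → ℤ) =>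
        ((c_R ⬝ᵥ p.1 + c_Z ⬝ᵥ cRv p.2.1 + d_R ⬝ᵥ p.2.2.1 + d_Z ⬝ᵥ cRv p.2.2.2 : ℝ) : EReal))
        '' IRset A_R A_Z B_R B_Z Q_R Q_Z P_R P_Z w_R w_Z r s) =
    sInf ((fun p : (Fin mR → ℝ) × (Fin mZ → ℤ) × (Fin nR → ℝ) × (Fin nZ → ℤ) =>
        ((c_R ⬝ᵥ p.1 + c_Z ⬝ᵥ cRv p.2.1 + d_R ⬝ᵥ p.2.2.1 + d_Z ⬝ᵥ cRv p.2.2.2 : ℝ) : EReal))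
        '' ProjFeasSet A_R A_Z B_R B_Z Q_R Q_Z P_R P_Z w_R w_Z r s) := by
  have h := IRset_eq_ProjFeasSet A_R A_Z B_R B_Z Q_R Q_Z P_R P_Z w_R w_Z r s
  exact ⟨h, by rw [h]⟩
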